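/- arXiv:2011.09936 — 5 statements merged into one kernel-verified Lean document; each statement's English description precedes it below -/
import Mathlib

section
/- Let d ≥ 1 be an integer, n a prime with n > d+1, and c an element of the field F_n with c ≠ 1 and c ≠ −d (as elements of F_n). Then the number of d-faces of the complex X_{d,n,c}, i.e., the number of (d+1)-element subsets {x_0, x_1, …, x_d} of F_n admitting an ordering of their elements such that c·x_d + Σ_{j=0}^{d−1} x_j = 0 in F_n, equals the binomial coefficient C(n−1, d). -/
/-!
For `c ≠ 1` the condition `c * x + ∑ (s \ {x}) = 0` reads `(1 - c) * x = ∑ s`, so a face `s`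
has a unique apex `x = (1 - c)⁻¹ * ∑ s`. Translating `s \ {x}` by `-x` gives a `d`-subset `t`
of `F_n` avoiding `0`. Conversely `s = {a} ∪ (a + t)` is a face with apex `a` exactly when
`(c + d) * a + ∑ t = 0`, and for `c ≠ -d` this has a unique solution `a`. Hence faces are in
bijection with the `d`-subsets of `F_n \ {0}`.
-/

open Finset Pointwise

section Cone
variable {G : Type*} [AddCommGroup G] [DecidableEq G] {s t : Finset G} {a x : G}

def cone (a : G) (t : Finset G) : Finset G := insert a (a +ᵥ t)

lemma mem_cone_self : a ∈ cone a t := mem_insert_self a _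

lemma notMem_vadd_finset_self (h : (0 : G) ∉ t) : a ∉ a +ᵥ t := by
  simpa [mem_vadd_finset] using h

lemma cone_erase (h : (0 : G) ∉ t) : (cone a t).erase a = a +ᵥ t :=
  erase_insert (notMem_vadd_finset_self h)

lemma card_cone (h : (0 : G) ∉ t) : #(cone a t) = #t + 1 := by
  rw [cone, card_insert_of_notMem (notMem_vadd_finset_self h), card_vadd_finset]

lemma neg_vadd_cone_erase (h : (0 : G) ∉ t) : -a +ᵥ (cone a t).erase a = t := by
  rw [cone_erase h, neg_vadd_vadd]

lemma zero_notMem_neg_vadd_erase (s : Finset G) (x : G) : (0 : G) ∉ -x +ᵥ s.erase x := by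
  simp [mem_vadd_finset, neg_add_eq_zero]

lemma card_neg_vadd_erase (hx : x ∈ s) : #(-x +ᵥ s.erase x) = #s - 1 := by
  rw [card_vadd_finset, card_erase_of_mem hx]

lemma cone_neg_vadd_erase (hx : x ∈ s) : cone x (-x +ᵥ s.erase x) = s := by
  rw [cone, vadd_neg_vadd, insert_erase hx]

lemma sum_vadd_finset (a : G) (t : Finset G) : ∑ y ∈ a +ᵥ t, y = #t • a + ∑ y ∈ t, y := by
  simp only [vadd_finset_def, vadd_eq_add]
  rw [sum_image fun _ _ _ _ ↦ add_left_cancel, sum_add_distrib, sum_const]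

end Cone

section Faces
variable {K : Type*} [Field K] (c : K) {s t : Finset K} {a x : K}

def apex (s : Finset K) : K := (1 - c)⁻¹ * ∑ y ∈ s, y

def base (t : Finset K) : K := (c + #t)⁻¹ * -∑ y ∈ t, y

def faces [DecidableEq K] [Fintype K] (d : ℕ) : Finset (Finset K) :=
  {s | #s = d + 1 ∧ ∃ x ∈ s, c * x + ∑ y ∈ s.erase x, y = 0}

variable {c}

lemma mul_add_sum_eq_zero_iff_eq_base (hct : c + #t ≠ 0) :
    (c + #t) * a + ∑ y ∈ t, y = 0 ↔ a = base c t := by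
  rw [base, eq_inv_mul_iff_mul_eq₀ hct, eq_neg_iff_add_eq_zero]

variable [DecidableEq K]

lemma mul_add_sum_erase_eq_zero_iff_eq_apex (hc : c ≠ 1) (hx : x ∈ s) :
    c * x + ∑ y ∈ s.erase x, y = 0 ↔ x = apex c s := by
  rw [sum_erase_eq_sub hx, apex, eq_inv_mul_iff_mul_eq₀ (sub_ne_zero.mpr hc.symm)]
  constructor <;> intro h <;> linear_combination -h

lemma exists_mul_add_sum_erase_eq_zero_iff_apex_mem (hc : c ≠ 1) :
    (∃ x ∈ s, c * x + ∑ y ∈ s.erase x, y = 0) ↔ apex c s ∈ s :=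
  ⟨fun ⟨_, hx, h⟩ ↦ (mul_add_sum_erase_eq_zero_iff_eq_apex hc hx).1 h ▸ hx,
    fun h ↦ ⟨_, h, (mul_add_sum_erase_eq_zero_iff_eq_apex hc h).2 rfl⟩⟩

lemma mul_add_sum_cone_erase (h : (0 : K) ∉ t) :
    c * a + ∑ y ∈ (cone a t).erase a, y = (c + #t) * a + ∑ y ∈ t, y := by
  rw [cone_erase h, sum_vadd_finset, nsmul_eq_mul]
  ring

lemma apex_cone_base (hc : c ≠ 1) (hct : c + #t ≠ 0) (h : (0 : K) ∉ t) :
    apex c (cone (base c t) t) = base c t := by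
  refine ((mul_add_sum_erase_eq_zero_iff_eq_apex hc mem_cone_self).1 ?_).symm
  rw [mul_add_sum_cone_erase h, mul_add_sum_eq_zero_iff_eq_base hct]

lemma base_neg_vadd_erase {d : ℕ} (hc : c ≠ 1) (hcd : c + d ≠ 0) (hs : #s = d + 1)
    (hx : apex c s ∈ s) : base c (-apex c s +ᵥ s.erase (apex c s)) = apex c s := by
  have hcard : #(-apex c s +ᵥ s.erase (apex c s)) = d := by
    rw [card_neg_vadd_erase hx, hs, Nat.add_sub_cancel]
  refine ((mul_add_sum_eq_zero_iff_eq_base (hcard ▸ hcd)).1 ?_).symm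
  rw [← mul_add_sum_cone_erase (zero_notMem_neg_vadd_erase s _), cone_neg_vadd_erase hx,
    mul_add_sum_erase_eq_zero_iff_eq_apex hc hx]

variable [Fintype K]

theorem card_faces_eq_card_filter_notMem_zero {d : ℕ} (hc : c ≠ 1) (hcd : c + d ≠ 0) :
    #(faces c d) = #{t : Finset K | #t = d ∧ (0 : K) ∉ t} := by
  simp_rw [faces, exists_mul_add_sum_erase_eq_zero_iff_apex_mem hc]
  refine card_bij' (fun s _ ↦ -apex c s +ᵥ s.erase (apex c s)) (fun t _ ↦ cone (base c t) t)
    ?_ ?_ ?_ ?_ <;> simp only [mem_filter, mem_univ, true_and]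
  · rintro s ⟨hcard, hs⟩
    exact ⟨by rw [card_neg_vadd_erase hs, hcard, Nat.add_sub_cancel],
      zero_notMem_neg_vadd_erase s _⟩
  · rintro t ⟨rfl, h⟩
    refine ⟨card_cone h, ?_⟩
    rw [apex_cone_base hc hcd h]
    exact mem_cone_self
  · rintro s ⟨hcard, hs⟩
    rw [base_neg_vadd_erase hc hcd hcard hs, cone_neg_vadd_erase hs]
  · rintro t ⟨rfl, h⟩
    rw [apex_cone_base hc hcd h, neg_vadd_cone_erase h]

end Faces

theorem card_filter_card_eq_notMem {α : Type*} [Fintype α] [DecidableEq α] (a : α) (d : ℕ) :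
    #{t : Finset α | #t = d ∧ a ∉ t} = (Fintype.card α - 1).choose d := by
  rw [← card_univ, ← card_erase_of_mem (mem_univ a), ← card_powersetCard]
  congr 1
  ext t
  simp [mem_powersetCard, subset_erase, and_comm]

theorem numFaces_eq_choose_general (d n : ℕ) [NeZero n] (hn : n.Prime)
    (c : ZMod n) (hc1 : c ≠ 1) (hcd : c ≠ -(d : ZMod n)) :
    (Finset.univ.filter fun s : Finset (ZMod n) =>
        s.card = d + 1 ∧ ∃ x ∈ s, c * x + ∑ y ∈ s.erase x, y = 0).card
      = Nat.choose (n - 1) d := by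
  have : Fact n.Prime := ⟨hn⟩
  have hcd' : c + d ≠ 0 := fun h ↦ hcd (eq_neg_of_add_eq_zero_left h)
  have h := card_faces_eq_card_filter_notMem_zero (d := d) hc1 hcd'
  rwa [card_filter_card_eq_notMem, ZMod.card] at h

/-- Let `d ≥ 1`, `n` a prime with `n > d + 1`, and `c ∈ F_n` with
`c ≠ 1` and `c ≠ -d`. The number of `(d+1)`-element subsets `{x₀, …, x_d}` of `F_n`
admitting an ordering with `c·x_d + Σ_{j<d} x_j = 0` equals `C(n-1, d)`. -/
theorem numFaces_eq_choose (d n : ℕ) [NeZero n] (hd : 1 ≤ d) (hn : n.Prime)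
    (hnd : d + 1 < n) (c : ZMod n) (hc1 : c ≠ 1) (hcd : c ≠ -(d : ZMod n)) :
    (Finset.univ.filter fun s : Finset (ZMod n) =>
        s.card = d + 1 ∧ ∃ x ∈ s, c * x + ∑ y ∈ s.erase x, y = 0).card
      = Nat.choose (n - 1) d :=
  numFaces_eq_choose_general d n hn c hc1 hcd
end

section
/- Let n be a prime, d ≥ 1 an integer, and c ∈ F_n with c ≠ 0. For every d-element subset σ = {x_0, …, x_{d−1}} of F_n, the number of elements y ∈ F_n ∖ σ such that σ ∪ {y} is a d-face of X_{d,n,c} is at most d+1. (Hence if X_{d,n,c} is a hypertree it is a hyperpath: every (d−1)-dimensional face is contained in at most d+1 faces of dimension d.) -/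
/-- For prime `n`, `d ≥ 1` and `c ∈ F_n` with `c ≠ 0`, every
`d`-element subset `σ` of `F_n` admits at most `d + 1` elements `y ∉ σ` such that
`σ ∪ {y}` is a `d`-face of `X_{d,n,c}` (i.e. a `(d+1)`-element subset admitting an
ordering `x₀, …, x_d` with `c·x_d + Σ_{j<d} x_j = 0`). -/
theorem face_contained_in_at_most_d_add_one (n d : ℕ) [NeZero n] (hn : n.Prime)
    (hd : 1 ≤ d) (c : ZMod n) (hc : c ≠ 0)
    (σ : Finset (ZMod n)) (hσ : σ.card = d) :
    (((Finset.univ : Finset (ZMod n)) \ σ).filter fun y =>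
        (insert y σ).card = d + 1 ∧
          ∃ x ∈ insert y σ, c * x + ∑ w ∈ (insert y σ).erase x, w = 0).card
      ≤ d + 1 := by
  classical
  haveI := Fact.mk hn
  set S := ∑ w ∈ σ, w with hS
  have hsub : (((Finset.univ : Finset (ZMod n)) \ σ).filter fun y =>
        (insert y σ).card = d + 1 ∧
          ∃ x ∈ insert y σ, c * x + ∑ w ∈ (insert y σ).erase x, w = 0) ⊆
      insert (-(c⁻¹ * S)) (σ.image fun x => -((c - 1) * x + S)) := by
    intro y hy
    simp only [Finset.mem_filter, Finset.mem_sdiff, Finset.mem_univ, true_and] at hy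
    obtain ⟨hyσ, _, x, hx, hxeq⟩ := hy
    rcases Finset.mem_insert.mp hx with rfl | hxσ
    · rw [Finset.erase_insert hyσ, ← hS] at hxeq
      have hy' : x = -(c⁻¹ * S) := by
        field_simp
        linear_combination hxeq
      simp [hy']
    · have hxy : x ≠ y := fun h => hyσ (h ▸ hxσ)
      have herase : (insert y σ).erase x = insert y (σ.erase x) := by
        rw [Finset.erase_insert_of_ne hxy.symm]
      have hynot : y ∉ σ.erase x := fun h => hyσ (Finset.mem_of_mem_erase h)
      rw [herase, Finset.sum_insert hynot, Finset.sum_erase_eq_sub hxσ, ← hS] at hxeq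
      have hy' : y = -((c - 1) * x + S) := by linear_combination hxeq
      exact Finset.mem_insert_of_mem (Finset.mem_image.mpr ⟨x, hxσ, hy'.symm⟩)
  calc _ ≤ _ := Finset.card_le_card hsub
    _ ≤ (σ.image fun x => -((c - 1) * x + S)).card + 1 := Finset.card_insert_le _ _
    _ ≤ d + 1 := by
        have := Finset.card_image_le (s := σ) (f := fun x => -((c - 1) * x + S))
        omega
end

section
/- Let r, t be positive integers and E ∈ MCB_{r,t}(ℚ). Then E is singular (as an rt×rt rational matrix) if and only if there exists a positive divisor k of r such that the t×t complex matrix E̲(ω_k) is singular, where ω_k = exp(2πi/k) is a primitive k-th root of unity. -/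
/-- For `E ∈ MCB_{r,t}` with blocks having first columns `cc k l`, `underE cc z` is
the `t × t` complex matrix whose `(k,l)` entry is `g_{k,l}(z) = Σ_j cc k l j · z^j`. -/
noncomputable def underE (r t : ℕ) (cc : Fin t → Fin t → Fin r → ℚ) (z : ℂ) :
    Matrix (Fin t) (Fin t) ℂ :=
  Matrix.of fun k l => ∑ j : Fin r, (cc k l j : ℂ) * z ^ (j : ℕ)

/-- The determinant of the `t×t` matrix of block polynomials, as a rational polynomial. -/
noncomputable def mcbPoly (r t : ℕ) (cc : Fin t → Fin t → Fin r → ℚ) : Polynomial ℚ :=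
  (Matrix.of fun k l => ∑ j : Fin r, Polynomial.C (cc k l j) * Polynomial.X ^ (j : ℕ) :
    Matrix (Fin t) (Fin t) (Polynomial ℚ)).det

lemma underE_det_eq_aeval (r t : ℕ) (cc : Fin t → Fin t → Fin r → ℚ) (z : ℂ) :
    (underE r t cc z).det = Polynomial.aeval z (mcbPoly r t cc) := by
  rw [mcbPoly, ← AlgHom.coe_toRingHom, RingHom.map_det]
  congr 1
  ext k l
  simp [underE, RingHom.mapMatrix_apply, Matrix.map_apply, map_sum, eq_ratCast]

/-- Two primitive `k`-th roots of unity in `ℂ` satisfy the same rational polynomials. -/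
lemma aeval_transfer {k : ℕ} (hk : 0 < k) {z1 z2 : ℂ}
    (h1 : IsPrimitiveRoot z1 k) (h2 : IsPrimitiveRoot z2 k) {Q : Polynomial ℚ}
    (hz : Polynomial.aeval z1 Q = 0) : Polynomial.aeval z2 Q = 0 := by
  have m1 := Polynomial.cyclotomic_eq_minpoly_rat h1 hk
  have m2 := Polynomial.cyclotomic_eq_minpoly_rat h2 hk
  have hd : minpoly ℚ z2 ∣ Q := by rw [← m2, m1]; exact minpoly.dvd ℚ z1 hz
  obtain ⟨c, rfl⟩ := hd
  rw [map_mul, minpoly.aeval, zero_mul]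

/-- A matrix `E ∈ MCB_{r,t}(ℚ)` (indexed by `Fin t × Fin r`, whose
`(k,l)` block is the circulant matrix with first column `cc k l`) is singular if and
only if there is a positive divisor `k` of `r` such that the `t × t` complex matrix
`E̲(ω_k)` is singular, where `ω_k = exp(2πi/k)`. -/
theorem mcb_singular_iff (r t : ℕ) (hr : 0 < r) (ht : 0 < t)
    (cc : Fin t → Fin t → Fin r → ℚ)
    (E : Matrix (Fin t × Fin r) (Fin t × Fin r) ℚ)
    (hE : ∀ (k l : Fin t) (i j : Fin r), E (k, i) (l, j) = cc k l (i - j)) :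
    E.det = 0 ↔ ∃ k : ℕ, 0 < k ∧ k ∣ r ∧
      (underE r t cc (Complex.exp (2 * Real.pi * Complex.I / k))).det = 0 := by
  classical
  haveI : NeZero r := ⟨hr.ne'⟩
  set ω : ℂ := Complex.exp (2 * Real.pi * Complex.I / r) with hωdef
  have hω : IsPrimitiveRoot ω r := Complex.isPrimitiveRoot_exp r hr.ne'
  have hωr : ω ^ r = 1 := hω.pow_eq_one
  have hωne : ω ≠ 0 := Complex.exp_ne_zero _
  set Eℂ : Matrix (Fin t × Fin r) (Fin t × Fin r) ℂ :=
    (algebraMap ℚ ℂ).mapMatrix E with hEℂ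
  -- the inverse roots
  set ν : Fin r → ℂ := fun m => (ω ^ (m : ℕ))⁻¹ with hν
  have hνne : ∀ m, ν m ≠ 0 := fun m => inv_ne_zero (pow_ne_zero _ hωne)
  have hνr : ∀ m, ν m ^ r = 1 := by
    intro m
    show ((ω ^ (m : ℕ))⁻¹) ^ r = 1
    rw [← inv_pow, ← pow_mul, mul_comm, pow_mul, inv_pow, hωr, inv_one, one_pow]
  -- key power identity
  have hpow : ∀ (z : ℂ), z ^ r = 1 → ∀ a b : Fin r,
      z ^ ((a - b : Fin r) : ℕ) * z ^ (b : ℕ) = z ^ (a : ℕ) := by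
    intro z hz a b
    calc z ^ ((a - b : Fin r) : ℕ) * z ^ (b : ℕ)
        = z ^ (((a - b : Fin r) : ℕ) + (b : ℕ)) := (pow_add z _ _).symm
      _ = z ^ ((((a - b : Fin r) : ℕ) + (b : ℕ)) % r) := pow_eq_pow_mod _ hz
      _ = z ^ (((a - b + b : Fin r)) : ℕ) := by rw [Fin.val_add]
      _ = z ^ (a : ℕ) := by rw [sub_add_cancel]
  set V : Matrix (Fin r) (Fin r) ℂ := Matrix.of fun i m => ν m ^ (i : ℕ) with hV
  set U : Matrix (Fin t × Fin r) (Fin t × Fin r) ℂ :=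
    (Matrix.blockDiagonal fun _ : Fin t => V).submatrix
      (Equiv.prodComm (Fin t) (Fin r)) (Equiv.prodComm (Fin t) (Fin r)) with hU
  set D : Matrix (Fin t × Fin r) (Fin t × Fin r) ℂ :=
    Matrix.blockDiagonal (fun m : Fin r => underE r t cc (ω ^ (m : ℕ))) with hD
  have hEentry : ∀ (k l : Fin t) (i j : Fin r), Eℂ (k, i) (l, j) = (cc k l (i - j) : ℂ) := by
    intro k l i j
    simp [hEℂ, RingHom.mapMatrix_apply, Matrix.map_apply, hE, eq_ratCast]
  have hUapp : ∀ (a : Fin t) (b : Fin r) (c : Fin t) (d : Fin r),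
      U (a, b) (c, d) = if a = c then ν d ^ (b : ℕ) else 0 := by
    intro a b c d
    simp [hU, Matrix.submatrix_apply, Matrix.blockDiagonal_apply, hV]
  have hDapp : ∀ (a : Fin t) (b : Fin r) (c : Fin t) (d : Fin r),
      D (a, b) (c, d) = if b = d then underE r t cc (ω ^ (b : ℕ)) a c else 0 := by
    intro a b c d
    simp [hD, Matrix.blockDiagonal_apply]
  have key : Eℂ * U = U * D := by
    ext ⟨k, i⟩ ⟨l, m⟩
    rw [Matrix.mul_apply, Matrix.mul_apply, Fintype.sum_prod_type, Fintype.sum_prod_type]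
    have hterm : ∀ d : Fin r, ν m ^ ((i - d : Fin r) : ℕ)
        = ν m ^ (i : ℕ) * (ω ^ (m : ℕ)) ^ (d : ℕ) := by
      intro d
      have h1 := hpow (ν m) (hνr m) i d
      have h2 : ν m ^ (d : ℕ) ≠ 0 := pow_ne_zero _ (hνne m)
      have h3 : (ω ^ (m : ℕ)) ^ (d : ℕ) = (ν m ^ (d : ℕ))⁻¹ := by
        show _ = (((ω ^ (m : ℕ))⁻¹) ^ (d : ℕ))⁻¹
        rw [← inv_pow, inv_inv]
      rw [h3, eq_mul_inv_iff_mul_eq₀ h2]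
      exact h1
    simp only [hUapp, hDapp, hEentry, mul_ite, ite_mul, mul_zero, zero_mul,
      Finset.sum_ite_eq, Finset.sum_ite_eq', Finset.mem_univ, if_true,
      Finset.sum_ite_irrel, Finset.sum_const_zero]
    calc ∑ j : Fin r, (cc k l (i - j) : ℂ) * ν m ^ (j : ℕ)
        = ∑ d : Fin r, (cc k l d : ℂ) * ν m ^ (((i - d : Fin r)) : ℕ) := by
          refine (Fintype.sum_equiv (Equiv.subLeft i) _ _ fun d => ?_).symm
          simp [sub_sub_cancel]
      _ = ν m ^ (i : ℕ) * underE r t cc (ω ^ (m : ℕ)) k l := by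
          simp only [underE, Matrix.of_apply, Finset.mul_sum]
          exact Finset.sum_congr rfl fun d _ => by rw [hterm d]; ring
  have hUdet : U.det ≠ 0 := by
    have h1 : U.det = V.det ^ t := by
      rw [hU, Matrix.det_submatrix_equiv_self, Matrix.det_blockDiagonal,
        Finset.prod_const, Finset.card_univ, Fintype.card_fin]
    have hVd : V.det ≠ 0 := by
      have h2 : V.det = (Matrix.vandermonde ν).det := by
        rw [← Matrix.det_transpose (Matrix.vandermonde ν)]
        congr 1
      rw [h2, Matrix.det_vandermonde]
      refine Finset.prod_ne_zero_iff.mpr fun a _ =>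
        Finset.prod_ne_zero_iff.mpr fun b hb => sub_ne_zero.mpr fun hEq => ?_
      have hab : a ≠ b := (Finset.mem_Ioi.mp hb).ne
      apply hab
      have hpow2 : ω ^ (a : ℕ) = ω ^ (b : ℕ) := (inv_injective hEq).symm
      exact Fin.ext (hω.pow_inj a.isLt b.isLt hpow2)
    rw [h1]; exact pow_ne_zero _ hVd
  have hdetprod : Eℂ.det = ∏ m : Fin r, (underE r t cc (ω ^ (m : ℕ))).det := by
    have h := congrArg Matrix.det key
    rw [Matrix.det_mul, Matrix.det_mul, mul_comm U.det D.det] at h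
    have h2 := mul_right_cancel₀ hUdet h
    rw [h2, hD, Matrix.det_blockDiagonal]
  have hdet0 : E.det = 0 ↔ ∃ m : Fin r, (underE r t cc (ω ^ (m : ℕ))).det = 0 := by
    constructor
    · intro h
      have hz : Eℂ.det = 0 := by
        rw [hEℂ, ← RingHom.map_det, h, map_zero]
      rw [hdetprod] at hz
      obtain ⟨m, _, hm⟩ := Finset.prod_eq_zero_iff.mp hz
      exact ⟨m, hm⟩
    · rintro ⟨m, hm⟩
      have hz : Eℂ.det = 0 := by
        rw [hdetprod]; exact Finset.prod_eq_zero (Finset.mem_univ m) hm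
      have h3 : (algebraMap ℚ ℂ) E.det = 0 := by rw [RingHom.map_det]; exact hz
      exact (algebraMap ℚ ℂ).injective (h3.trans (map_zero _).symm)
  rw [hdet0]
  constructor
  · rintro ⟨m, hm⟩
    by_cases hm0 : (m : ℕ) = 0
    · refine ⟨1, one_pos, one_dvd r, ?_⟩
      have h1 : Complex.exp (2 * Real.pi * Complex.I / (1 : ℕ)) = ω ^ (m : ℕ) := by
        rw [hm0, pow_zero]
        norm_num [Complex.exp_two_pi_mul_I]
      rw [h1]; exact hm
    · set k := r / Nat.gcd r (m : ℕ) with hk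
      have hgpos : 0 < Nat.gcd r (m : ℕ) := Nat.gcd_pos_of_pos_left _ hr
      have hkpos : 0 < k := Nat.div_pos (Nat.le_of_dvd hr (Nat.gcd_dvd_left _ _)) hgpos
      have hkdvd : k ∣ r := Nat.div_dvd_of_dvd (Nat.gcd_dvd_left _ _)
      have hord : orderOf (ω ^ (m : ℕ)) = k := by
        rw [orderOf_pow' ω hm0, ← hω.eq_orderOf]
      have hprim1 : IsPrimitiveRoot (ω ^ (m : ℕ)) k := hord ▸ IsPrimitiveRoot.orderOf _
      have hprim2 : IsPrimitiveRoot (Complex.exp (2 * Real.pi * Complex.I / k)) k :=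
        Complex.isPrimitiveRoot_exp k hkpos.ne'
      refine ⟨k, hkpos, hkdvd, ?_⟩
      rw [underE_det_eq_aeval]
      refine aeval_transfer hkpos hprim1 hprim2 ?_
      rw [← underE_det_eq_aeval]; exact hm
  · rintro ⟨k, hkpos, hkdvd, hk0⟩
    obtain ⟨s, hs⟩ := hkdvd
    have hs0 : s ≠ 0 := by rintro rfl; omega
    refine ⟨⟨s % r, Nat.mod_lt _ hr⟩, ?_⟩
    have hωs : ω ^ (s % r) = Complex.exp (2 * Real.pi * Complex.I / k) := by
      rw [← pow_eq_pow_mod s hωr, hωdef, ← Complex.exp_nat_mul]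
      congr 1
      have hrC : (r : ℂ) = (k : ℂ) * (s : ℂ) := by exact_mod_cast congrArg (Nat.cast : ℕ → ℂ) hs
      have hkC : (k : ℂ) ≠ 0 := Nat.cast_ne_zero.mpr hkpos.ne'
      have hsC : (s : ℂ) ≠ 0 := Nat.cast_ne_zero.mpr hs0
      rw [hrC]
      field_simp
    show (underE r t cc (ω ^ (s % r))).det = 0
    rw [hωs]; exact hk0
end

section
/- Let n be a prime and c ∈ F_n with c ∉ {0, 1, −1, −2}. For every a ∈ F_n^*, the two columns of the matrix F_{n,c} indexed by the triples (a, −(c+1)a, a) and (−(c+1)a, a, a) are equal. Consequently, rank(F_{n,c}) ≤ n² − n. -/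
/-!
For `a ≠ 0` and `b = -(c+1)a` the third coordinate of both `(a, b)` and `(b, a)` is `a`, so
the triples `(a, b, a)` and `(b, a, a)` have the same cyclic pairs `{(a,b), (b,a), (a,a)}` and
hence equal columns. Because `c(c+2) ≠ 0`, i.e. `(c+1)² ≠ 1`, the column `(a, b)` is not itself
of the form `(-(c+1)a', a')`; so the `n - 1` columns `(-(c+1)a', a')` can be dropped without
changing the column space, leaving `n² - 1 - (n - 1)` columns.
-/

/-- The matrix `F_{n,c}`: rows are indexed by pairs `(u,v) ∈ F_n² ∖ {(0,0)}`, columns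
by pairs `(x,y) ∈ F_n² ∖ {(0,0)}` (representing the triple `(x, y, z)` with
`z = -(x+y)/c`); the entry is `1` iff `(u,v) ∈ {(x,y), (y,z), (z,x)}`. -/
def Fmat (n : ℕ) [Fact n.Prime] (c : ZMod n) :
    Matrix {p : ZMod n × ZMod n // p ≠ 0} {p : ZMod n × ZMod n // p ≠ 0} ℚ :=
  Matrix.of fun uv xy =>
    if uv.1 = (xy.1.1, xy.1.2) ∨ uv.1 = (xy.1.2, -(xy.1.1 + xy.1.2) / c) ∨
        uv.1 = (-(xy.1.1 + xy.1.2) / c, xy.1.1)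
    then 1 else 0

open Matrix

theorem Matrix.rank_le_card_of_forall_exists_col_eq {m n R : Type*} [Fintype n] [CommSemiring R]
    [StrongRankCondition R] (A : Matrix m n R) (t : Finset n)
    (h : ∀ j, ∃ k ∈ t, A.col k = A.col j) : A.rank ≤ t.card := by
  have hrange : Set.range A.col = Set.range fun k : t => A.col k := by
    ext v
    constructor
    · rintro ⟨j, rfl⟩
      obtain ⟨k, hk, hkj⟩ := h j
      exact ⟨⟨k, hk⟩, hkj⟩
    · rintro ⟨k, rfl⟩
      exact ⟨k, rfl⟩
  rw [rank_eq_finrank_span_cols, hrange, ← Fintype.card_coe t]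
  exact finrank_range_le_card _

section Fmat

variable {n : ℕ} [Fact n.Prime] {c : ZMod n}

theorem Fmat_apply_swap_of_neg_succ_mul (hc0 : c ≠ 0) (a : ZMod n) (ha : a ≠ 0) (row) :
    Fmat n c row ⟨(a, -(c + 1) * a), fun h => ha (congrArg Prod.fst h)⟩
      = Fmat n c row ⟨(-(c + 1) * a, a), fun h => ha (congrArg Prod.snd h)⟩ := by
  have hz₁ : -(a + -(c + 1) * a) / c = a := by field_simp; ring
  have hz₂ : -(-(c + 1) * a + a) / c = a := by field_simp; ring
  simp only [Fmat, of_apply, hz₁, hz₂]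
  exact if_congr (by tauto) rfl rfl

variable (c) in
def dupColIndex (a : {a : ZMod n // a ≠ 0}) : {p : ZMod n × ZMod n // p ≠ 0} :=
  ⟨(-(c + 1) * a, a), fun h => a.2 (congrArg Prod.snd h)⟩

theorem dupColIndex_injective : Function.Injective (dupColIndex (n := n) c) :=
  fun _ _ h => Subtype.ext (congrArg (fun p => p.1.2) h)

theorem card_compl_range_dupColIndex :
    (Finset.univ.image (dupColIndex c))ᶜ.card = n ^ 2 - n := by
  rw [Finset.card_compl, Finset.card_image_of_injective _ dupColIndex_injective,
    Finset.card_univ, Fintype.card_subtype_compl, Fintype.card_subtype_compl]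
  simp only [Fintype.card_prod, ZMod.card, Fintype.card_unique, ← sq]
  have := (Fact.out : n.Prime).pos
  omega

theorem Fmat_exists_col_eq_not_mem_range_dupColIndex (hc0 : c ≠ 0) (hcm2 : c ≠ -2) (j) :
    ∃ k ∈ (Finset.univ.image (dupColIndex c))ᶜ, (Fmat n c).col k = (Fmat n c).col j := by
  by_cases hj : j ∈ Finset.univ.image (dupColIndex c)
  · obtain ⟨⟨a, ha⟩, -, rfl⟩ := Finset.mem_image.mp hj
    refine ⟨⟨(a, -(c + 1) * a), fun h => ha (congrArg Prod.fst h)⟩, ?_,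
      funext fun row => Fmat_apply_swap_of_neg_succ_mul hc0 a ha row⟩
    simp only [Finset.mem_compl, Finset.mem_image, Finset.mem_univ, true_and, not_exists]
    rintro ⟨b, hb⟩ hab
    simp only [dupColIndex, Subtype.mk.injEq, Prod.mk.injEq] at hab
    have : c * (c + 2) * a = 0 := by linear_combination hab.1 + (c + 1) * hab.2
    simp only [mul_eq_zero] at this
    exact this.elim (·.elim hc0 fun h => hcm2 (eq_neg_of_add_eq_zero_left h)) ha
  · exact ⟨j, Finset.mem_compl.mpr hj, rfl⟩

end Fmat

theorem Fmat_repeated_columns_and_rank_general (n : ℕ) [Fact n.Prime] (c : ZMod n)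
    (hc0 : c ≠ 0) (hcm2 : c ≠ -2) :
    (∀ a : ZMod n, ∀ ha : a ≠ 0, ∀ row,
      Fmat n c row ⟨(a, -(c + 1) * a), fun h => ha (congrArg Prod.fst h)⟩
        = Fmat n c row ⟨(-(c + 1) * a, a), fun h => ha (congrArg Prod.snd h)⟩) ∧
    (Fmat n c).rank ≤ n ^ 2 - n := by
  refine ⟨Fmat_apply_swap_of_neg_succ_mul hc0, ?_⟩
  calc (Fmat n c).rank ≤ (Finset.univ.image (dupColIndex c))ᶜ.card :=
        rank_le_card_of_forall_exists_col_eq _ _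
          (Fmat_exists_col_eq_not_mem_range_dupColIndex hc0 hcm2)
    _ = n ^ 2 - n := card_compl_range_dupColIndex

/-- For a prime `n` and `c ∈ F_n ∖ {0, 1, -1, -2}`, for every
`a ∈ F_n^*` the two columns of `F_{n,c}` indexed by the triples `(a, -(c+1)a, a)`
and `(-(c+1)a, a, a)` (i.e. by the pairs `(a, -(c+1)a)` and `(-(c+1)a, a)`) are
equal; consequently `rank(F_{n,c}) ≤ n² - n`. -/
theorem Fmat_repeated_columns_and_rank (n : ℕ) [Fact n.Prime] (c : ZMod n)
    (hc0 : c ≠ 0) (hc1 : c ≠ 1) (hcm1 : c ≠ -1) (hcm2 : c ≠ -2) :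
    (∀ a : ZMod n, ∀ ha : a ≠ 0, ∀ row,
      Fmat n c row ⟨(a, -(c + 1) * a), fun h => ha (congrArg Prod.fst h)⟩
        = Fmat n c row ⟨(-(c + 1) * a, a), fun h => ha (congrArg Prod.snd h)⟩) ∧
    (Fmat n c).rank ≤ n ^ 2 - n :=
  Fmat_repeated_columns_and_rank_general n c hc0 hcm2
end

section
/- Let n be a prime and c ∈ F_n with c ∉ {0, 1, −1, −2}. If rank(F_{n,c}) = n² − n over ℚ, then rank(A_{n,c}) = C(n−1,2) over ℚ, and hence X_{2,n,c} is a hypertree (is ℚ-acyclic). -/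
set_option maxHeartbeats 2000000


/-- A `2`-face of the complex `X_{2,n,c}`: a `3`-element subset `{x, y, z}` of `F_n`
admitting an ordering `(x, y, z)` with `x + y + c·z = 0`. -/
def IsTwoFace (n : ℕ) (c : ZMod n) (s : Finset (ZMod n)) : Prop :=
  s.card = 3 ∧ ∃ x y z : ZMod n, s = {x, y, z} ∧ x + y + c * z = 0

instance (n : ℕ) [NeZero n] (c : ZMod n) : DecidablePred (IsTwoFace n c) := fun s =>
  inferInstanceAs (Decidable (s.card = 3 ∧ ∃ x y z : ZMod n, s = {x, y, z} ∧ x + y + c * z = 0))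

/-- Entry of the boundary matrix in the row of a `2`-subset `e` and the column of a
`3`-subset `f` with elements `u < v < w` (ordered by `ZMod.val`): it is `0` unless
`e ⊆ f`; it is `-1` if `e = {u, w}` and `+1` if `e = {u,v}` or `e = {v,w}`. -/
def bdryEntry (n : ℕ) (e f : Finset (ZMod n)) : ℚ :=
  if e ⊆ f then
    (if ∃ g ∈ f, g ∉ e ∧ ∃ a ∈ e, ∃ b ∈ e, ZMod.val a < ZMod.val g ∧ ZMod.val g < ZMod.val b
      then -1 else 1)
  else 0

/-- The boundary matrix `A_{n,c}` of `X_{2,n,c}`, with rows indexed by the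
`2`-element subsets of `F_n` and columns indexed by the `2`-faces of `X_{2,n,c}`. -/
def bdryMat (n : ℕ) (c : ZMod n) :
    Matrix {e : Finset (ZMod n) // e.card = 2} {s : Finset (ZMod n) // IsTwoFace n c s} ℚ :=
  Matrix.of fun e f => bdryEntry n e.1 f.1

namespace HT

variable (n : ℕ) [Fact n.Prime] (c : ZMod n)

/-- orientation sign of an ordered triple of distinct elements -/
def ori (x y z : ZMod n) : ℚ :=
  if (x.val < y.val ∧ y.val < z.val) ∨ (z.val < x.val ∧ x.val < y.val) ∨
     (y.val < z.val ∧ z.val < x.val) then 1 else -1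

/-- sign of a directed edge -/
def dsgn (u v : ZMod n) : ℚ :=
  if u.val < v.val then 1 else if v.val < u.val then -1 else 0

abbrev R := {p : ZMod n × ZMod n // p ≠ 0}
abbrev S := {x : ZMod n // x ≠ 0}
abbrev E := {e : Finset (ZMod n) // e.card = 2}
abbrev Fc := {s : Finset (ZMod n) // IsTwoFace n c s}

def Mmat : Matrix (R n) (Fc n c) ℚ :=
  Matrix.of fun q s =>
    if s.1 = {q.1.1, q.1.2, -(q.1.1 + q.1.2) / c} then ori n q.1.1 q.1.2 (-(q.1.1 + q.1.2) / c)
    else 0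

def Dmat : Matrix (R n) (E n) ℚ :=
  Matrix.of fun p e => if e.1 = {p.1.1, p.1.2} then dsgn n p.1.1 p.1.2 else 0

def Umat : Matrix (R n) (S n) ℚ :=
  Matrix.of fun q x =>
    (if q.1 = (x.1, -(1 + c) * x.1) then 1 else 0) - (if q.1 = (-(1 + c) * x.1, x.1) then 1 else 0)

section helpers
variable {n c}

lemma card3 {x y z : ZMod n} (h1 : x ≠ y) (h2 : x ≠ z) (h3 : y ≠ z) :
    ({x, y, z} : Finset (ZMod n)).card = 3 := by
  rw [Finset.card_insert_of_notMem (by simp [h1, h2]),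
    Finset.card_insert_of_notMem (by simp [h3]), Finset.card_singleton]

lemma distinct_of_card3 {x y z : ZMod n} (h : ({x, y, z} : Finset (ZMod n)).card = 3) :
    x ≠ y ∧ x ≠ z ∧ y ≠ z := by
  have key : ∀ (a b : ZMod n) (s : Finset (ZMod n)), s ⊆ {a, b} → s.card ≤ 2 := fun a b s hs =>
    (Finset.card_le_card hs).trans ((Finset.card_insert_le _ _).trans (by simp))
  refine ⟨?_, ?_, ?_⟩ <;> intro hEq
  · have := key y z {x, y, z} (by rw [hEq]; intro t ht; simp at ht ⊢; tauto); omega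
  · have := key z y {x, y, z} (by rw [hEq]; intro t ht; simp at ht ⊢; tauto); omega
  · have := key x z {x, y, z} (by rw [hEq]; intro t ht; simp at ht ⊢; tauto); omega

lemma val_ne {x y : ZMod n} (h : x ≠ y) : x.val ≠ y.val := by
  intro hv; exact h (ZMod.val_injective n hv)

/-- the two orderings of a face -/
lemma orderings (hc1 : c ≠ 1) {x y z x' y' z' : ZMod n}
    (hcard : ({x, y, z} : Finset (ZMod n)).card = 3)
    (heq : x + y + c * z = 0)
    (hset : ({x', y', z'} : Finset (ZMod n)) = {x, y, z})
    (heq' : x' + y' + c * z' = 0) :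
    (x' = x ∧ y' = y ∧ z' = z) ∨ (x' = y ∧ y' = x ∧ z' = z) := by
  obtain ⟨hxy, hxz, hyz⟩ := distinct_of_card3 hcard
  have hcard' : ({x', y', z'} : Finset (ZMod n)).card = 3 := by rw [hset]; exact hcard
  obtain ⟨hxy', hxz', hyz'⟩ := distinct_of_card3 hcard'
  have hsum : x' + y' + z' = x + y + z := by
    have h1 : (∑ t ∈ ({x', y', z'} : Finset (ZMod n)), t) = x' + y' + z' := by
      rw [Finset.sum_insert (by simp [hxy', hxz']), Finset.sum_insert (by simp [hyz']),
        Finset.sum_singleton]; ring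
    have h2 : (∑ t ∈ ({x, y, z} : Finset (ZMod n)), t) = x + y + z := by
      rw [Finset.sum_insert (by simp [hxy, hxz]), Finset.sum_insert (by simp [hyz]),
        Finset.sum_singleton]; ring
    rw [← h1, ← h2, hset]
  have hz' : z' ∈ ({x, y, z} : Finset (ZMod n)) := by rw [← hset]; simp
  have hx' : x' ∈ ({x, y, z} : Finset (ZMod n)) := by rw [← hset]; simp
  simp only [Finset.mem_insert, Finset.mem_singleton] at hz' hx'
  have hc1' : (1 : ZMod n) - c ≠ 0 := by
    intro h; apply hc1; have : (1 : ZMod n) = c := by linear_combination h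
    exact this.symm
  rcases hz' with hz | hz | hz
  · -- z' = x : contradiction
    exfalso
    have hzx : (1 - c) * (z - x) = 0 := by
      linear_combination -heq + heq' - hsum + (1 - c) * hz
    rcases mul_eq_zero.1 hzx with h | h
    · exact hc1' h
    · exact hxz (by linear_combination -h)
  · -- z' = y : contradiction
    exfalso
    have hzy : (1 - c) * (z - y) = 0 := by
      linear_combination -heq + heq' - hsum + (1 - c) * hz
    rcases mul_eq_zero.1 hzy with h | h
    · exact hc1' h
    · exact hyz (by linear_combination -h)
  · -- z' = z
    rcases hx' with hx | hx | hx
    · left; exact ⟨hx, by linear_combination hsum - hx - hz, hz⟩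
    · right; exact ⟨hx, by linear_combination hsum - hx - hz, hz⟩
    · exact absurd (hx.trans hz.symm) hxz'

lemma bdry_expand {a b g : ZMod n} (hag : a ≠ g) (hbg : b ≠ g) :
    bdryEntry n {a, b} {a, b, g} =
      if (a.val < g.val ∧ g.val < b.val) ∨ (b.val < g.val ∧ g.val < a.val) then -1 else 1 := by
  have hsub : ({a, b} : Finset (ZMod n)) ⊆ {a, b, g} := by intro t ht; simp at ht ⊢; tauto
  unfold bdryEntry
  rw [if_pos hsub]
  refine if_congr ?_ rfl rfl
  constructor
  · rintro ⟨w, hw, hnot, x, hx, y, hy, h1, h2⟩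
    simp only [Finset.mem_insert, Finset.mem_singleton] at hw hx hy hnot
    push_neg at hnot
    have hwg : w = g := by tauto
    subst hwg
    rcases hx with rfl | rfl <;> rcases hy with rfl | rfl <;> omega
  · rintro (⟨h1, h2⟩ | ⟨h1, h2⟩)
    · exact ⟨g, by simp, by simp [Ne.symm hag, Ne.symm hbg], a, by simp, b, by simp, h1, h2⟩
    · exact ⟨g, by simp, by simp [Ne.symm hag, Ne.symm hbg], b, by simp, a, by simp, h1, h2⟩

/-- The key sign identity. -/
lemma crux (u v x y z : ZMod n) (hxy : x ≠ y) (hxz : x ≠ z) (hyz : y ≠ z) :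
    (if (u, v) = (x, y) ∨ (u, v) = (y, z) ∨ (u, v) = (z, x) then (1 : ℚ) else 0) * ori n x y z
      + (if (u, v) = (y, x) ∨ (u, v) = (x, z) ∨ (u, v) = (z, y) then (1 : ℚ) else 0) * ori n y x z
      = dsgn n u v * bdryEntry n {u, v} {x, y, z} := by
  have hXY := val_ne hxy
  have hXZ := val_ne hxz
  have hYZ := val_ne hyz
  by_cases huv : u = v
  · subst huv
    rw [if_neg, if_neg]
    · simp [dsgn]
    · simp only [Prod.mk.injEq]; push_neg
      refine ⟨fun h1 h2 => ?_, fun h1 h2 => ?_, fun h1 h2 => ?_⟩ <;>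
        (exfalso; subst h1; subst h2; simp_all)
    · simp only [Prod.mk.injEq]; push_neg
      refine ⟨fun h1 h2 => ?_, fun h1 h2 => ?_, fun h1 h2 => ?_⟩ <;>
        (exfalso; subst h1; subst h2; simp_all)
  by_cases hu : u ∈ ({x, y, z} : Finset (ZMod n))
  case neg =>
    simp only [Finset.mem_insert, Finset.mem_singleton] at hu
    push_neg at hu
    obtain ⟨h1, h2, h3⟩ := hu
    rw [if_neg, if_neg, bdryEntry, if_neg]
    · ring
    · intro hsub
      have := hsub (Finset.mem_insert_self u {v})
      simp only [Finset.mem_insert, Finset.mem_singleton] at this; tauto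
    · simp only [Prod.mk.injEq]; tauto
    · simp only [Prod.mk.injEq]; tauto
  by_cases hv : v ∈ ({x, y, z} : Finset (ZMod n))
  case neg =>
    simp only [Finset.mem_insert, Finset.mem_singleton] at hv
    push_neg at hv
    obtain ⟨h1, h2, h3⟩ := hv
    rw [if_neg, if_neg, bdryEntry, if_neg]
    · ring
    · intro hsub
      have := hsub (Finset.mem_insert_of_mem (Finset.mem_singleton_self v))
      simp only [Finset.mem_insert, Finset.mem_singleton] at this; tauto
    · simp only [Prod.mk.injEq]; tauto
    · simp only [Prod.mk.injEq]; tauto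
  -- main case
  simp only [Finset.mem_insert, Finset.mem_singleton] at hu hv
  have setyzx : ({x, y, z} : Finset (ZMod n)) = {y, z, x} := by ext t; simp; tauto
  have setzxy : ({x, y, z} : Finset (ZMod n)) = {z, x, y} := by ext t; simp; tauto
  have setyxz : ({x, y, z} : Finset (ZMod n)) = {y, x, z} := by ext t; simp; tauto
  have setzyx : ({x, y, z} : Finset (ZMod n)) = {z, y, x} := by ext t; simp; tauto
  have setxzy : ({x, y, z} : Finset (ZMod n)) = {x, z, y} := by ext t; simp; tauto
  rcases hu with rfl | rfl | rfl <;> rcases hv with rfl | rfl | rfl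
  · exact absurd rfl huv
  · -- (u,v) = (x,y)
    rw [bdry_expand hxz hyz]
    rw [if_pos (Or.inl rfl), if_neg (by simp only [Prod.mk.injEq]; tauto)]
    simp only [ori, dsgn]
    split_ifs <;> norm_num <;> omega
  · -- (u,v) = (x,z)
    rw [setxzy, bdry_expand hxy (Ne.symm hyz)]
    rw [if_neg (by simp only [Prod.mk.injEq]; tauto), if_pos (by tauto)]
    simp only [ori, dsgn]
    split_ifs <;> norm_num <;> omega
  · -- (u,v) = (y,x)
    rw [setyxz, bdry_expand hyz hxz]
    rw [if_neg (by simp only [Prod.mk.injEq]; tauto), if_pos (by tauto)]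
    simp only [ori, dsgn]
    split_ifs <;> norm_num <;> omega
  · exact absurd rfl huv
  · -- (u,v) = (y,z)
    rw [setyzx, bdry_expand (Ne.symm hxy) (Ne.symm hxz)]
    rw [if_pos (by tauto), if_neg (by simp only [Prod.mk.injEq]; tauto)]
    simp only [ori, dsgn]
    split_ifs <;> norm_num <;> omega
  · -- (u,v) = (z,x)
    rw [setzxy, bdry_expand (Ne.symm hyz) hxy]
    rw [if_pos (by tauto), if_neg (by simp only [Prod.mk.injEq]; tauto)]
    simp only [ori, dsgn]
    split_ifs <;> norm_num <;> omega
  · -- (u,v) = (z,y)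
    rw [setzyx, bdry_expand (Ne.symm hxz) (Ne.symm hxy)]
    rw [if_neg (by simp only [Prod.mk.injEq]; tauto), if_pos (by tauto)]
    simp only [ori, dsgn]
    split_ifs <;> norm_num <;> omega
  · exact absurd rfl huv

lemma ori_ne_zero (x y z : ZMod n) : ori n x y z ≠ 0 := by
  unfold ori; split_ifs <;> norm_num

lemma z_val {x y z : ZMod n} (hc0 : c ≠ 0) (heq : x + y + c * z = 0) :
    -(x + y) / c = z := by
  have h : -(x + y) = c * z := by linear_combination -heq
  rw [h, mul_div_cancel_left₀ _ hc0]

lemma pair_ne_zero {x y : ZMod n} (hxy : x ≠ y) : ((x, y) : ZMod n × ZMod n) ≠ 0 := by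
  intro h
  rw [Prod.ext_iff] at h
  exact hxy (h.1.trans h.2.symm)

lemma FM_eq_DA (hc0 : c ≠ 0) (hc1 : c ≠ 1) :
    Fmat n c * Mmat n c = Dmat n * bdryMat n c := by
  ext p s
  obtain ⟨⟨u, v⟩, hp⟩ := p
  obtain ⟨hcard, x, y, z, hs, heq⟩ := s.2
  have hcard3 : ({x, y, z} : Finset (ZMod n)).card = 3 := hs ▸ hcard
  obtain ⟨hxy, hxz, hyz⟩ := distinct_of_card3 hcard3
  have hz : -(x + y) / c = z := z_val hc0 heq
  have hz' : -(y + x) / c = z := by rw [add_comm]; exact hz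
  set q1 : R n := ⟨(x, y), pair_ne_zero hxy⟩ with hq1
  set q2 : R n := ⟨(y, x), pair_ne_zero (Ne.symm hxy)⟩ with hq2
  have hq12 : q1 ≠ q2 := by
    intro h; apply hxy
    have := congrArg (fun q : R n => q.1.1) h
    simpa [hq1, hq2] using this
  -- LHS
  have hL : (Fmat n c * Mmat n c) ⟨(u, v), hp⟩ s
      = Fmat n c ⟨(u, v), hp⟩ q1 * ori n x y z + Fmat n c ⟨(u, v), hp⟩ q2 * ori n y x z := by
    rw [Matrix.mul_apply]
    rw [← Finset.sum_subset (Finset.subset_univ ({q1, q2} : Finset (R n)))]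
    · rw [Finset.sum_pair hq12]
      have hM1 : Mmat n c q1 s = ori n x y z := by
        show (if s.1 = {x, y, -(x + y) / c} then ori n x y (-(x + y) / c) else 0) = _
        rw [hz, if_pos (by rw [hs])]
      have hM2 : Mmat n c q2 s = ori n y x z := by
        show (if s.1 = {y, x, -(y + x) / c} then ori n y x (-(y + x) / c) else 0) = _
        rw [hz', if_pos (by rw [hs, Finset.insert_comm])]
      rw [hM1, hM2]
    · intro q _ hq
      have hMq : Mmat n c q s = 0 := by
        show (if s.1 = {q.1.1, q.1.2, -(q.1.1 + q.1.2) / c} then _ else (0:ℚ)) = 0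
        rw [if_neg]
        intro hset
        have heq' : q.1.1 + q.1.2 + c * (-(q.1.1 + q.1.2) / c) = 0 := by
          rw [mul_comm, div_mul_cancel₀ _ hc0]; ring
        have := orderings hc1 hcard3 heq (by rw [← hset, ← hs]) heq'
        apply hq
        simp only [Finset.mem_insert, Finset.mem_singleton]
        rcases this with ⟨h1, h2, _⟩ | ⟨h1, h2, _⟩
        · left; rw [hq1]; apply Subtype.ext; rw [Prod.ext_iff]; exact ⟨h1, h2⟩
        · right; rw [hq2]; apply Subtype.ext; rw [Prod.ext_iff]; exact ⟨h1, h2⟩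
      rw [hMq, mul_zero]
  -- RHS
  have hR : (Dmat n * bdryMat n c) ⟨(u, v), hp⟩ s
      = dsgn n u v * bdryEntry n {u, v} s.1 := by
    rw [Matrix.mul_apply]
    by_cases huv : u = v
    · rw [Finset.sum_eq_zero, huv, dsgn, if_neg (lt_irrefl _), if_neg (lt_irrefl _), zero_mul]
      intro e _
      have : Dmat n ⟨(u, v), hp⟩ e = 0 := by
        show (if e.1 = {u, v} then dsgn n u v else 0) = 0
        split_ifs with h
        · rw [huv, dsgn, if_neg (lt_irrefl _), if_neg (lt_irrefl _)]
        · rfl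
      rw [this, zero_mul]
    · have hcard2 : ({u, v} : Finset (ZMod n)).card = 2 := by
        rw [Finset.card_insert_of_notMem (by simp [huv]), Finset.card_singleton]
      set e0 : E n := ⟨{u, v}, hcard2⟩ with he0
      rw [Finset.sum_eq_single_of_mem e0 (Finset.mem_univ _)]
      · show (if e0.1 = {u, v} then dsgn n u v else 0) * bdryEntry n e0.1 s.1 = _
        rw [if_pos rfl]
      · intro e _ hee
        have : Dmat n ⟨(u, v), hp⟩ e = 0 := by
          show (if e.1 = {u, v} then dsgn n u v else 0) = 0
          rw [if_neg]
          intro h; exact hee (Subtype.ext h)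
        rw [this, zero_mul]
  rw [hL, hR, hs]
  have hF1 : Fmat n c ⟨(u, v), hp⟩ q1
      = (if (u, v) = (x, y) ∨ (u, v) = (y, z) ∨ (u, v) = (z, x) then (1 : ℚ) else 0) := by
    show (if (u, v) = (x, y) ∨ (u, v) = (y, -(x + y) / c) ∨ (u, v) = (-(x + y) / c, x)
        then (1:ℚ) else 0) = _
    rw [hz]
  have hF2 : Fmat n c ⟨(u, v), hp⟩ q2
      = (if (u, v) = (y, x) ∨ (u, v) = (x, z) ∨ (u, v) = (z, y) then (1 : ℚ) else 0) := by
    show (if (u, v) = (y, x) ∨ (u, v) = (x, -(y + x) / c) ∨ (u, v) = (-(y + x) / c, y)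
        then (1:ℚ) else 0) = _
    rw [hz']
  rw [hF1, hF2]
  exact crux u v x y z hxy hxz hyz

lemma FU_eq_zero (hc0 : c ≠ 0) (hcm2 : c ≠ -2) : Fmat n c * Umat n c = 0 := by
  ext p t
  obtain ⟨a, ha⟩ := t
  have hab : a ≠ -(1 + c) * a := by
    intro h
    have h2 : (2 + c) * a = 0 := by linear_combination h
    rcases mul_eq_zero.1 h2 with h | h
    · exact hcm2 (by linear_combination h)
    · exact ha h
  set b : ZMod n := -(1 + c) * a with hb
  have hzab : -(a + b) / c = a := by
    apply z_val hc0; rw [hb]; ring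
  have hzba : -(b + a) / c = a := by rw [add_comm]; exact hzab
  set qa : R n := ⟨(a, b), pair_ne_zero hab⟩ with hqa
  set qb : R n := ⟨(b, a), pair_ne_zero (Ne.symm hab)⟩ with hqb
  have hqab : qa ≠ qb := by
    intro h; apply hab
    have := congrArg (fun q : R n => q.1.1) h
    simpa [hqa, hqb] using this
  rw [Matrix.mul_apply]
  rw [← Finset.sum_subset (Finset.subset_univ ({qa, qb} : Finset (R n)))]
  · rw [Finset.sum_pair hqab]
    have hUa : Umat n c qa ⟨a, ha⟩ = 1 := by
      show ((if ((a : ZMod n), b) = (a, -(1 + c) * a) then (1:ℚ) else 0)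
        - (if ((a : ZMod n), b) = (-(1 + c) * a, a) then (1:ℚ) else 0)) = 1
      rw [if_pos (by rw [hb]), if_neg, sub_zero]
      intro h
      rw [Prod.ext_iff] at h
      exact hab (h.1.trans (by rw [hb]))
    have hUb : Umat n c qb ⟨a, ha⟩ = -1 := by
      show ((if ((b : ZMod n), a) = (a, -(1 + c) * a) then (1:ℚ) else 0)
        - (if ((b : ZMod n), a) = (-(1 + c) * a, a) then (1:ℚ) else 0)) = -1
      rw [if_neg, if_pos (by rw [hb]), zero_sub]
      intro h
      rw [Prod.ext_iff] at h
      exact hab (h.1.symm.trans (by rw [hb]))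
    have hFab : Fmat n c p qa = Fmat n c p qb := by
      show (if p.1 = (a, b) ∨ p.1 = (b, -(a + b) / c) ∨ p.1 = (-(a + b) / c, a)
          then (1:ℚ) else 0)
        = (if p.1 = (b, a) ∨ p.1 = (a, -(b + a) / c) ∨ p.1 = (-(b + a) / c, b)
          then (1:ℚ) else 0)
      rw [hzab, hzba]
      exact if_congr (by tauto) rfl rfl
    rw [hUa, hUb, hFab, Matrix.zero_apply]; ring
  · intro q _ hq
    have : Umat n c q ⟨a, ha⟩ = 0 := by
      show ((if q.1 = (a, -(1 + c) * a) then (1:ℚ) else 0)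
        - (if q.1 = (-(1 + c) * a, a) then (1:ℚ) else 0)) = 0
      rw [if_neg, if_neg, sub_zero]
      · intro h; apply hq
        simp only [Finset.mem_insert, Finset.mem_singleton, hqa, hqb, Subtype.ext_iff]
        right; rw [h, hb]
      · intro h; apply hq
        simp only [Finset.mem_insert, Finset.mem_singleton, hqa, hqb, Subtype.ext_iff]
        left; rw [h, hb]
    rw [this, mul_zero]

lemma card_faces (hc0 : c ≠ 0) (hc1 : c ≠ 1) (hcm1 : c ≠ -1) (hcm2 : c ≠ -2)
    (h5 : 5 ≤ n) : Fintype.card (Fc n c) = Nat.choose (n - 1) 2 := by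
  haveI : NeZero n := ⟨by omega⟩
  have hc1p : (1 : ZMod n) + c ≠ 0 := by
    intro h; exact hcm1 (by linear_combination h)
  have hc2p : (2 : ZMod n) + c ≠ 0 := by
    intro h; exact hcm2 (by linear_combination h)
  set P : Finset (ZMod n × ZMod n) :=
    Finset.univ.filter fun p => p.1 ≠ p.2 ∧ p.2 ≠ -(1 + c) * p.1 ∧ p.1 ≠ -(1 + c) * p.2
    with hP
  -- Step A : card P = (n-1) * (n-2)
  have hPcard : P.card = (n - 1) * (n - 2) := by
    have hfib := Finset.card_eq_sum_card_fiberwise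
      (f := Prod.fst) (s := P) (t := Finset.univ) (fun p _ => Finset.mem_univ _)
    have hper : ∀ x : ZMod n, (P.filter fun p => p.1 = x).card
        = (Finset.univ.filter fun y : ZMod n =>
            x ≠ y ∧ y ≠ -(1 + c) * x ∧ x ≠ -(1 + c) * y).card := by
      intro x
      apply Finset.card_bij (fun p _ => p.2)
      · rintro ⟨a, b⟩ hp
        simp only [hP, Finset.mem_filter, Finset.mem_univ, true_and] at hp ⊢
        obtain ⟨⟨h1, h2, h3⟩, h4⟩ := hp
        subst h4; exact ⟨h1, h2, h3⟩
      · rintro ⟨a, b⟩ ha ⟨a', b'⟩ ha' hbb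
        simp only [hP, Finset.mem_filter] at ha ha'
        simp only at hbb
        rw [Prod.ext_iff]
        exact ⟨ha.2.trans ha'.2.symm, hbb⟩
      · intro y hy
        simp only [Finset.mem_filter, Finset.mem_univ, true_and] at hy
        refine ⟨(x, y), ?_, rfl⟩
        simp only [hP, Finset.mem_filter, Finset.mem_univ, true_and]
        exact ⟨hy, trivial⟩
    have hcount : ∀ x : ZMod n, x ≠ 0 → (Finset.univ.filter fun y : ZMod n =>
        x ≠ y ∧ y ≠ -(1 + c) * x ∧ x ≠ -(1 + c) * y).card = n - 3 := by
      intro x hx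
      have hthird : ∀ y : ZMod n, (x ≠ -(1 + c) * y) ↔ y ≠ -x / (1 + c) := by
        intro y
        constructor
        · intro h hy; apply h; rw [hy]; field_simp
        · intro h hy; apply h; rw [hy]; field_simp
      have hset : (Finset.univ.filter fun y : ZMod n =>
          x ≠ y ∧ y ≠ -(1 + c) * x ∧ x ≠ -(1 + c) * y)
          = ({x, -(1 + c) * x, -x / (1 + c)} : Finset (ZMod n))ᶜ := by
        ext y
        simp only [Finset.mem_filter, Finset.mem_univ, true_and, Finset.mem_compl,
          Finset.mem_insert, Finset.mem_singleton, hthird y]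
        push_neg
        constructor
        · rintro ⟨h1, h2, h3⟩; exact ⟨Ne.symm h1, h2, h3⟩
        · rintro ⟨h1, h2, h3⟩; exact ⟨Ne.symm h1, h2, h3⟩
      rw [hset, Finset.card_compl, ZMod.card]
      have hd1 : x ≠ -(1 + c) * x := by
        intro h
        have h2 : (2 + c) * x = 0 := by linear_combination h
        rcases mul_eq_zero.1 h2 with h | h
        · exact hc2p h
        · exact hx h
      have hd2 : x ≠ -x / (1 + c) := by
        intro h
        have h2 : x * (1 + c) = -x / (1 + c) * (1 + c) := by rw [← h]
        rw [div_mul_cancel₀ _ hc1p] at h2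
        have h3 : (2 + c) * x = 0 := by linear_combination h2
        rcases mul_eq_zero.1 h3 with h' | h'
        · exact hc2p h'
        · exact hx h'
      have hd3 : -(1 + c) * x ≠ -x / (1 + c) := by
        intro h
        have h2 : -(1 + c) * x * (1 + c) = -x / (1 + c) * (1 + c) := by rw [← h]
        rw [div_mul_cancel₀ _ hc1p] at h2
        have h3 : c * ((c + 2) * x) = 0 := by linear_combination -h2
        rcases mul_eq_zero.1 h3 with h' | h'
        · exact hc0 h'
        · rcases mul_eq_zero.1 h' with h'' | h''
          · exact hc2p (by linear_combination h'')
          · exact hx h''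
      rw [card3 hd1 hd2 hd3]
    have hcount0 : (Finset.univ.filter fun y : ZMod n =>
        (0 : ZMod n) ≠ y ∧ y ≠ -(1 + c) * 0 ∧ (0 : ZMod n) ≠ -(1 + c) * y).card = n - 1 := by
      have hset : (Finset.univ.filter fun y : ZMod n =>
          (0 : ZMod n) ≠ y ∧ y ≠ -(1 + c) * 0 ∧ (0 : ZMod n) ≠ -(1 + c) * y)
          = ({0} : Finset (ZMod n))ᶜ := by
        ext y
        simp only [Finset.mem_filter, Finset.mem_univ, true_and, Finset.mem_compl,
          Finset.mem_singleton, mul_zero]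
        constructor
        · rintro ⟨h1, _, _⟩; exact Ne.symm h1
        · intro h
          refine ⟨Ne.symm h, h, ?_⟩
          intro h2
          rcases mul_eq_zero.1 h2.symm with h' | h'
          · exact hc1p (by linear_combination -h')
          · exact h h'
      rw [hset, Finset.card_compl, ZMod.card, Finset.card_singleton]
    rw [hfib]
    calc (∑ x : ZMod n, (P.filter fun p => p.1 = x).card)
        = ∑ x : ZMod n, (Finset.univ.filter fun y : ZMod n =>
            x ≠ y ∧ y ≠ -(1 + c) * x ∧ x ≠ -(1 + c) * y).card := by
          exact Finset.sum_congr rfl fun x _ => hper x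
      _ = (n - 1) * (n - 2) := by
          rw [← Finset.add_sum_erase _ _ (Finset.mem_univ (0 : ZMod n)), hcount0]
          rw [Finset.sum_congr rfl (fun x hx => hcount x (Finset.ne_of_mem_erase hx))]
          rw [Finset.sum_const, Finset.card_erase_of_mem (Finset.mem_univ _),
            Finset.card_univ, ZMod.card, smul_eq_mul]
          obtain ⟨m, rfl⟩ : ∃ m, n = m + 5 := ⟨n - 5, by omega⟩
          have e1 : m + 5 - 1 = m + 4 := by omega
          have e2 : m + 5 - 2 = m + 3 := by omega
          have e3 : m + 5 - 3 = m + 2 := by omega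
          rw [e1, e2, e3]; ring
  -- Step B : card P = 2 * card Phalf
  set Ph : Finset (ZMod n × ZMod n) := P.filter fun p => p.1.val < p.2.val with hPh
  have hhalf : P.card = 2 * Ph.card := by
    have hsplit : (P.filter fun p => p.1.val < p.2.val).card
        + (P.filter fun p => ¬ p.1.val < p.2.val).card = P.card :=
      Finset.card_filter_add_card_filter_not (s := P) (p := fun p => p.1.val < p.2.val)
    have himg : P.filter (fun p => ¬ p.1.val < p.2.val) = Ph.image Prod.swap := by
      ext ⟨a, b⟩
      simp only [Finset.mem_filter, Finset.mem_image, hPh, hP, Finset.mem_univ, true_and,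
        Prod.exists]
      constructor
      · rintro ⟨⟨h1, h2, h3⟩, h4⟩
        refine ⟨b, a, ⟨⟨⟨Ne.symm h1, ?_, ?_⟩, ?_⟩, rfl⟩⟩
        · intro h; exact h3 h
        · intro h; exact h2 h
        · have := val_ne h1; omega
      · rintro ⟨x, y, ⟨⟨⟨h1, h2, h3⟩, h4⟩, hsw⟩⟩
        rw [Prod.ext_iff] at hsw
        obtain ⟨hya, hxb⟩ := hsw
        simp only [Prod.fst_swap, Prod.snd_swap] at hya hxb
        subst hya; subst hxb
        exact ⟨⟨Ne.symm h1, fun h => h3 h, fun h => h2 h⟩, by omega⟩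
    have hinj : (Ph.image Prod.swap).card = Ph.card :=
      Finset.card_image_of_injective _ Prod.swap_injective
    rw [himg, hinj] at hsplit
    rw [← hPh] at hsplit
    omega
  -- Step C : bijection between faces and Ph
  have hkey : ∀ x y : ZMod n, x + y + c * (-(x + y) / c) = 0 := fun x y => by
    rw [mul_comm, div_mul_cancel₀ _ hc0]; ring
  have hfacecard : ∀ x y : ZMod n, x ≠ y → y ≠ -(1 + c) * x → x ≠ -(1 + c) * y →
      ({x, y, -(x + y) / c} : Finset (ZMod n)).card = 3 := by
    intro x y h1 h2 h3
    have hzx : -(x + y) / c ≠ x := by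
      intro h
      have h' := hkey x y
      rw [h] at h'
      exact h2 (by linear_combination h')
    have hzy : -(x + y) / c ≠ y := by
      intro h
      have h' := hkey x y
      rw [h] at h'
      exact h3 (by linear_combination h')
    exact card3 h1 (Ne.symm hzx) (Ne.symm hzy)
  have hbij : Ph.card = (Finset.univ.filter fun s => IsTwoFace n c s).card := by
    apply Finset.card_bij (fun p _ => ({p.1, p.2, -(p.1 + p.2) / c} : Finset (ZMod n)))
    · rintro ⟨x, y⟩ hp
      simp only [hPh, hP, Finset.mem_filter, Finset.mem_univ, true_and] at hp
      obtain ⟨⟨h1, h2, h3⟩, _⟩ := hp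
      simp only [Finset.mem_filter, Finset.mem_univ, true_and]
      exact ⟨hfacecard x y h1 h2 h3, x, y, _, rfl, hkey x y⟩
    · rintro ⟨x, y⟩ hp ⟨x', y'⟩ hp' hss
      simp only [hPh, hP, Finset.mem_filter, Finset.mem_univ, true_and] at hp hp'
      obtain ⟨⟨h1, h2, h3⟩, h4⟩ := hp
      obtain ⟨⟨h1', h2', h3'⟩, h4'⟩ := hp'
      simp only at hss
      have := orderings hc1 (hfacecard x y h1 h2 h3) (hkey x y) hss.symm (hkey x' y')
      rcases this with ⟨ha, hb, _⟩ | ⟨ha, hb, _⟩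
      · rw [Prod.ext_iff]; exact ⟨ha.symm, hb.symm⟩
      · exfalso
        have hv1 : x'.val = y.val := by rw [ha]
        have hv2 : y'.val = x.val := by rw [hb]
        omega
    · intro s hs
      simp only [Finset.mem_filter, Finset.mem_univ, true_and] at hs
      obtain ⟨hcard, x, y, z, hseq, heq⟩ := hs
      obtain ⟨hxy, hxz, hyz⟩ := distinct_of_card3 (hseq ▸ hcard)
      have hz := z_val hc0 heq
      have hcy : y ≠ -(1 + c) * x := by
        intro h
        apply hxz
        have hcz : c * (x - z) = 0 := by linear_combination h - heq
        rcases mul_eq_zero.1 hcz with h' | h'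
        · exact absurd h' hc0
        · linear_combination h'
      have hcx : x ≠ -(1 + c) * y := by
        intro h
        apply hyz
        have hcz : c * (y - z) = 0 := by linear_combination h - heq
        rcases mul_eq_zero.1 hcz with h' | h'
        · exact absurd h' hc0
        · linear_combination h'
      rcases lt_trichotomy x.val y.val with hlt | heqv | hgt
      · refine ⟨(x, y), ?_, ?_⟩
        · simp only [hPh, hP, Finset.mem_filter, Finset.mem_univ, true_and]
          exact ⟨⟨hxy, hcy, hcx⟩, hlt⟩
        · simp only; rw [hz, hseq]
      · exact absurd heqv (val_ne hxy)
      · refine ⟨(y, x), ?_, ?_⟩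
        · simp only [hPh, hP, Finset.mem_filter, Finset.mem_univ, true_and]
          exact ⟨⟨Ne.symm hxy, hcx, hcy⟩, hgt⟩
        · simp only
          rw [add_comm y x, hz, hseq, Finset.insert_comm]
  -- combine
  rw [Fintype.card_subtype, ← hbij, Nat.choose_two_right]
  have e1 : n - 1 - 1 = n - 2 := by omega
  rw [e1]
  omega

lemma ab_ne (hc0 : c ≠ 0) (hcm2 : c ≠ -2) {a : ZMod n} (ha : a ≠ 0) :
    a ≠ -(1 + c) * a := by
  intro h
  have h2 : (2 + c) * a = 0 := by linear_combination h
  rcases mul_eq_zero.1 h2 with h | h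
  · exact hcm2 (by linear_combination h)
  · exact ha h

end helpers

end HT

lemma HT.no_c2 : ∀ c : ZMod 2, c ≠ 0 → c ≠ 1 → False := by decide

lemma HT.no_c3 : ∀ c : ZMod 3, c ≠ 0 → c ≠ 1 → c ≠ -1 → False := by decide

/-- For a prime `n` and `c ∈ F_n ∖ {0, 1, -1, -2}`, if
`rank(F_{n,c}) = n² - n` over `ℚ`, then `rank(A_{n,c}) = C(n-1, 2)` over `ℚ`, i.e.
`X_{2,n,c}` is a hypertree (is `ℚ`-acyclic). -/
theorem acyclic_of_Fmat_full_rank (n : ℕ) [Fact n.Prime] (c : ZMod n)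
    (hc0 : c ≠ 0) (hc1 : c ≠ 1) (hcm1 : c ≠ -1) (hcm2 : c ≠ -2)
    (hF : (Fmat n c).rank = n ^ 2 - n) :
    (bdryMat n c).rank = Nat.choose (n - 1) 2 := by
  classical
  have hprime : n.Prime := Fact.out
  have htwo : 2 ≤ n := hprime.two_le
  have h5 : 5 ≤ n := by
    by_contra h
    push_neg at h
    clear hF
    interval_cases n
    · exact HT.no_c2 c hc0 hc1
    · exact HT.no_c3 c hc0 hc1 hcm1
    · exact absurd hprime (by norm_num)
  haveI : NeZero n := ⟨by omega⟩
  -- cardinalities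
  have hcardR : Fintype.card (HT.R n) = n ^ 2 - 1 := by
    have h1 : Fintype.card {p : ZMod n × ZMod n // p ≠ 0}
        = Fintype.card (ZMod n × ZMod n) - 1 := by
      simpa using Fintype.card_subtype_compl (fun p : ZMod n × ZMod n => p = 0)
    rw [h1]; simp [ZMod.card, sq]
  have hcardS : Fintype.card (HT.S n) = n - 1 := by
    have h1 : Fintype.card {x : ZMod n // x ≠ 0} = Fintype.card (ZMod n) - 1 := by
      simpa using Fintype.card_subtype_compl (fun x : ZMod n => x = 0)
    rw [h1, ZMod.card]
  have hcardFc := HT.card_faces (n := n) (c := c) hc0 hc1 hcm1 hcm2 h5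
  have hc2p : (2 : ZMod n) + c ≠ 0 := by
    intro h; exact hcm2 (by linear_combination h)
  -- kernel dimension of F
  have hkerF : Module.finrank ℚ (LinearMap.ker (Fmat n c).mulVecLin) = n - 1 := by
    have hrn := LinearMap.finrank_range_add_finrank_ker (Fmat n c).mulVecLin
    rw [Module.finrank_fintype_fun_eq_card, hcardR] at hrn
    have hrk : (Fmat n c).rank = Module.finrank ℚ (LinearMap.range (Fmat n c).mulVecLin) := rfl
    rw [← hrk, hF] at hrn
    have hn2 : n ≤ n ^ 2 := by nlinarith
    omega
  set L : ((HT.Fc n c → ℚ) × (HT.S n → ℚ)) →ₗ[ℚ] (HT.R n → ℚ) :=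
    LinearMap.coprod (HT.Mmat n c).mulVecLin (HT.Umat n c).mulVecLin with hLdef
  have hLapp : ∀ w t, L (w, t) = (HT.Mmat n c).mulVec w + (HT.Umat n c).mulVec t := by
    intro w t
    rw [hLdef, LinearMap.coprod_apply, Matrix.mulVecLin_apply, Matrix.mulVecLin_apply]
  have hMsum : ∀ (w : HT.Fc n c → ℚ) (q : HT.R n),
      (HT.Mmat n c).mulVec w q = ∑ s', HT.Mmat n c q s' * w s' := fun w q => rfl
  have hUsum : ∀ (t : HT.S n → ℚ) (q : HT.R n),
      (HT.Umat n c).mulVec t q = ∑ x', HT.Umat n c q x' * t x' := fun t q => rfl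
  -- injectivity of L
  have hLinj : Function.Injective L := by
    rw [← LinearMap.ker_eq_bot, Submodule.eq_bot_iff]
    rintro ⟨w, t⟩ hwt
    rw [LinearMap.mem_ker, hLapp] at hwt
    have ht : t = 0 := by
      funext x
      obtain ⟨a, ha⟩ := x
      have hab : a ≠ -(1 + c) * a := HT.ab_ne hc0 hcm2 ha
      have hzab : -(a + -(1 + c) * a) / c = a := by
        apply HT.z_val hc0; ring
      set q : HT.R n := ⟨(a, -(1 + c) * a), HT.pair_ne_zero hab⟩ with hq
      have h0 := congrFun hwt q
      simp only [Pi.add_apply, Pi.zero_apply] at h0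
      have hMq : (HT.Mmat n c).mulVec w q = 0 := by
        rw [hMsum]
        apply Finset.sum_eq_zero
        intro s' _
        have hM0 : HT.Mmat n c q s' = 0 := by
          show (if s'.1 = {a, -(1 + c) * a, -(a + -(1 + c) * a) / c} then _ else (0:ℚ)) = 0
          rw [if_neg]
          intro hset
          rw [hzab] at hset
          have hsub : s'.1 ⊆ {a, -(1 + c) * a} := by
            rw [hset]; intro u hu
            simp only [Finset.mem_insert, Finset.mem_singleton] at hu ⊢
            tauto
          have hle : s'.1.card ≤ 2 :=
            (Finset.card_le_card hsub).trans ((Finset.card_insert_le _ _).trans (by simp))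
          have := s'.2.1
          omega
        rw [hM0, zero_mul]
      have hUq : (HT.Umat n c).mulVec t q = t ⟨a, ha⟩ := by
        rw [hUsum]
        rw [Finset.sum_eq_single_of_mem (⟨a, ha⟩ : HT.S n) (Finset.mem_univ _)]
        · have hU1 : HT.Umat n c q ⟨a, ha⟩ = 1 := by
            show ((if ((a : ZMod n), -(1 + c) * a) = (a, -(1 + c) * a) then (1:ℚ) else 0)
              - (if ((a : ZMod n), -(1 + c) * a) = (-(1 + c) * a, a) then (1:ℚ) else 0)) = 1
            rw [if_pos rfl, if_neg, sub_zero]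
            intro h
            rw [Prod.ext_iff] at h
            exact hab h.1
          rw [hU1, one_mul]
        · intro x' _ hx'
          have hU0 : HT.Umat n c q x' = 0 := by
            show ((if ((a : ZMod n), -(1 + c) * a) = (x'.1, -(1 + c) * x'.1) then (1:ℚ) else 0)
              - (if ((a : ZMod n), -(1 + c) * a) = (-(1 + c) * x'.1, x'.1) then (1:ℚ) else 0)) = 0
            rw [if_neg, if_neg, sub_zero]
            · intro h
              rw [Prod.ext_iff] at h
              obtain ⟨h1, h2⟩ := h
              simp only at h1 h2
              have hca : c * ((c + 2) * a) = 0 := by linear_combination -h1 - (1 + c) * h2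
              rcases mul_eq_zero.1 hca with h' | h'
              · exact hc0 h'
              · rcases mul_eq_zero.1 h' with h'' | h''
                · exact hc2p (by linear_combination h'')
                · exact ha h''
            · intro h
              rw [Prod.ext_iff] at h
              obtain ⟨h1, _⟩ := h
              simp only at h1
              exact hx' (Subtype.ext h1.symm)
          rw [hU0, zero_mul]
      rw [hMq, hUq, zero_add] at h0
      exact h0
    subst ht
    have hw0 : (HT.Mmat n c).mulVec w = 0 := by
      rw [Matrix.mulVec_zero, add_zero] at hwt
      exact hwt
    have hw : w = 0 := by
      funext s
      obtain ⟨s1, hcard, x, y, z, hs, heq⟩ := s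
      obtain ⟨hxy, hxz, hyz⟩ := HT.distinct_of_card3 (hs ▸ hcard)
      have hz : -(x + y) / c = z := HT.z_val hc0 heq
      set q1 : HT.R n := ⟨(x, y), HT.pair_ne_zero hxy⟩ with hq1
      have h0 := congrFun hw0 q1
      rw [hMsum, Pi.zero_apply] at h0
      set sface : HT.Fc n c := ⟨s1, hcard, x, y, z, hs, heq⟩ with hsface
      rw [Finset.sum_eq_single_of_mem sface (Finset.mem_univ _)] at h0
      · have hM1 : HT.Mmat n c q1 sface = HT.ori n x y z := by
          show (if sface.1 = {x, y, -(x + y) / c} then HT.ori n x y (-(x + y) / c) else 0) = _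
          rw [hz, if_pos (by rw [hsface]; exact hs)]
        rw [hM1] at h0
        exact (mul_eq_zero.1 h0).resolve_left (HT.ori_ne_zero (n := n) x y z)
      · intro s' _ hs'
        have hM0 : HT.Mmat n c q1 s' = 0 := by
          show (if s'.1 = {x, y, -(x + y) / c} then _ else (0:ℚ)) = 0
          rw [if_neg]
          intro hset
          rw [hz] at hset
          apply hs'
          apply Subtype.ext
          rw [hset]
          exact hs.symm
        rw [hM0, zero_mul]
    rw [hw]
    rfl
  -- membership in the kernel of F
  have hmem : ∀ (p : (LinearMap.ker (bdryMat n c).mulVecLin) × (HT.S n → ℚ)),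
      (Fmat n c).mulVecLin (L (p.1.1, p.2)) = 0 := by
    rintro ⟨⟨w, hwker⟩, t⟩
    rw [LinearMap.mem_ker, Matrix.mulVecLin_apply] at hwker
    simp only [Matrix.mulVecLin_apply, hLapp]
    rw [Matrix.mulVec_add, Matrix.mulVec_mulVec, Matrix.mulVec_mulVec,
      HT.FM_eq_DA hc0 hc1, HT.FU_eq_zero hc0 hcm2, Matrix.zero_mulVec,
      ← Matrix.mulVec_mulVec, hwker, Matrix.mulVec_zero, add_zero]
  -- the injection into ker F
  set L' : ((LinearMap.ker (bdryMat n c).mulVecLin) × (HT.S n → ℚ)) →ₗ[ℚ] (HT.R n → ℚ) :=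
    L.comp ((LinearMap.ker (bdryMat n c).mulVecLin).subtype.prodMap
      (LinearMap.id : (HT.S n → ℚ) →ₗ[ℚ] (HT.S n → ℚ))) with hL'def
  have hL'mem : ∀ p, L' p ∈ LinearMap.ker (Fmat n c).mulVecLin := by
    rintro ⟨⟨w, hwker⟩, t⟩
    rw [LinearMap.mem_ker]
    exact hmem ⟨⟨w, hwker⟩, t⟩
  set Φ := L'.codRestrict (LinearMap.ker (Fmat n c).mulVecLin) hL'mem with hΦdef
  have hΦinj : Function.Injective Φ := by
    intro p p' hpp
    have h1 : L' p = L' p' := congrArg Subtype.val hpp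
    rw [hL'def] at h1
    simp only [LinearMap.comp_apply] at h1
    have h2 := hLinj h1
    obtain ⟨⟨w, hw⟩, t⟩ := p
    obtain ⟨⟨w', hw'⟩, t'⟩ := p'
    simp only [LinearMap.prodMap_apply, Submodule.coe_subtype, LinearMap.id_apply,
      Prod.ext_iff] at h2
    obtain ⟨h3, h4⟩ := h2
    rw [Prod.ext_iff]
    exact ⟨Subtype.ext h3, h4⟩
  have hle := LinearMap.finrank_le_finrank_of_injective hΦinj
  rw [Module.finrank_prod, Module.finrank_fintype_fun_eq_card, hcardS, hkerF] at hle
  have hker0 : Module.finrank ℚ (LinearMap.ker (bdryMat n c).mulVecLin) = 0 := by omega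
  have hfin := LinearMap.finrank_range_add_finrank_ker (bdryMat n c).mulVecLin
  rw [Module.finrank_fintype_fun_eq_card, hcardFc, hker0, add_zero] at hfin
  exact hfin
end
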